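/- arXiv:2309.06806 — 5 statements merged into one kernel-verified Lean document; each statement's English description precedes it below -/
import Mathlib

section
/- For a prime power q and positive integers n ≥ k ≥ 1, the Gaussian binomial coefficient satisfies [n choose k]_q < q^{k(n-k)} · (1 + 2k/(q-1)). -/
noncomputable def gaussBinom (q n k : ℕ) : ℚ :=
  ∏ i ∈ Finset.range k, ((q : ℚ) ^ (n - i) - 1) / ((q : ℚ) ^ (k - i) - 1)

/-!
Reading the factors of `[n choose k]_q` in reverse order, the `j`-th one is
`(q^(n-k+j) - 1)/(q^j - 1) < q^(n-k) · q^j/(q^j - 1)`, so `[n choose k]_q` is less than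
`q^(k(n-k)) ∏_{j=1}^{k} (1 + 1/(q^j - 1))`. The last product is at most `1 + 2k/(q-1)` by
induction on `k`: multiplying by the next factor `1 + 1/(q^(k+1) - 1)` costs at most `2/(q-1)`,
which amounts to `q + 2k + 1 ≤ 2 q^(k+1)`.
-/

open Finset

section LinearOrderedField

variable {K : Type*} [Field K] [LinearOrder K] [IsStrictOrderedRing K]

lemma add_two_mul_add_one_le_two_mul_pow_succ {x : K} (hx : 2 ≤ x) (k : ℕ) :
    x + (2 * k + 1) ≤ 2 * x ^ (k + 1) := by
  induction k with
  | zero => norm_num; linarith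
  | succ m ih =>
    have h1 : (1 : K) ≤ x ^ (m + 1) := one_le_pow₀ (by linarith)
    rw [pow_succ]
    push_cast
    nlinarith

lemma one_add_div_mul_one_add_inv_le {x : K} (hx : 2 ≤ x) (m : ℕ) :
    (1 + 2 * m / (x - 1)) * (1 + 1 / (x ^ (m + 1) - 1)) ≤ 1 + 2 * (m + 1 : ℕ) / (x - 1) := by
  have hx1 : 0 < x - 1 := by linarith
  have hy : 0 < x ^ (m + 1) - 1 := sub_pos.mpr (one_lt_pow₀ (by linarith) (by omega))
  have key : 0 ≤ 2 * (x ^ (m + 1) - 1) - (x - 1 + 2 * m) := by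
    linarith [add_two_mul_add_one_le_two_mul_pow_succ hx m]
  rw [← sub_nonneg]
  have expand : 1 + 2 * (m + 1 : ℕ) / (x - 1) - (1 + 2 * m / (x - 1)) * (1 + 1 / (x ^ (m + 1) - 1))
      = (2 * (x ^ (m + 1) - 1) - (x - 1 + 2 * m)) / ((x - 1) * (x ^ (m + 1) - 1)) := by
    push_cast
    field_simp
    ring
  rw [expand]
  positivity

lemma prod_one_add_inv_pow_sub_one_le {x : K} (hx : 2 ≤ x) (k : ℕ) :
    ∏ j ∈ range k, (1 + 1 / (x ^ (j + 1) - 1)) ≤ 1 + 2 * k / (x - 1) := by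
  induction k with
  | zero => simp
  | succ m ih =>
    have hterm : 0 ≤ 1 + 1 / (x ^ (m + 1) - 1) := by
      have : 1 < x ^ (m + 1) := one_lt_pow₀ (by linarith) (by omega)
      have : 0 < 1 / (x ^ (m + 1) - 1) := by simp only [one_div, inv_pos, sub_pos, this]
      linarith
    rw [prod_range_succ]
    exact (mul_le_mul_of_nonneg_right ih hterm).trans (one_add_div_mul_one_add_inv_le hx m)

lemma pow_add_sub_one_div_lt {x : K} (hx : 1 < x) (d : ℕ) {j : ℕ} (hj : 1 ≤ j) :
    (x ^ (d + j) - 1) / (x ^ j - 1) < x ^ d * (1 + 1 / (x ^ j - 1)) := by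
  have hden : 0 < x ^ j - 1 := sub_pos.mpr (one_lt_pow₀ hx (by omega))
  have : x ^ d * (1 + 1 / (x ^ j - 1)) = x ^ (d + j) / (x ^ j - 1) := by
    field_simp
    ring
  rw [this]
  exact div_lt_div_of_pos_right (by linarith) hden

end LinearOrderedField

lemma gaussBinom_eq_prod_reverse (q : ℕ) {n k : ℕ} (hkn : k ≤ n) :
    gaussBinom q n k =
      ∏ j ∈ range k, ((q : ℚ) ^ (n - k + (j + 1)) - 1) / ((q : ℚ) ^ (j + 1) - 1) := by
  rw [gaussBinom, ← prod_range_reflect]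
  refine prod_congr rfl fun j hj => ?_
  have hj := mem_range.mp hj
  rw [show n - (k - 1 - j) = n - k + (j + 1) by omega, show k - (k - 1 - j) = j + 1 by omega]

theorem stmt1 (q n k : ℕ) (hq : IsPrimePow q) (hk : 1 ≤ k) (hkn : k ≤ n) :
    gaussBinom q n k < (q : ℚ) ^ (k * (n - k)) * (1 + 2 * k / ((q : ℚ) - 1)) := by
  have hq2 : (2 : ℚ) ≤ q := by exact_mod_cast hq.two_le
  have hq1 : (1 : ℚ) < q := by linarith
  have hfactor_pos : ∀ j ∈ range k, 0 < ((q : ℚ) ^ (n - k + (j + 1)) - 1) / ((q : ℚ) ^ (j + 1) - 1) :=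
    fun j _ => div_pos (sub_pos.mpr (one_lt_pow₀ hq1 (by omega)))
      (sub_pos.mpr (one_lt_pow₀ hq1 (by omega)))
  calc gaussBinom q n k
      < ∏ j ∈ range k, (q : ℚ) ^ (n - k) * (1 + 1 / ((q : ℚ) ^ (j + 1) - 1)) := by
        rw [gaussBinom_eq_prod_reverse q hkn]
        exact prod_lt_prod_of_nonempty hfactor_pos
          (fun j _ => pow_add_sub_one_div_lt hq1 (n - k) (by omega))
          (nonempty_range_iff.mpr (by omega))
    _ = (q : ℚ) ^ (k * (n - k)) * ∏ j ∈ range k, (1 + 1 / ((q : ℚ) ^ (j + 1) - 1)) := by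
        rw [prod_mul_distrib, prod_const, card_range, ← pow_mul, Nat.mul_comm]
    _ ≤ (q : ℚ) ^ (k * (n - k)) * (1 + 2 * k / ((q : ℚ) - 1)) :=
        mul_le_mul_of_nonneg_left (prod_one_add_inv_pow_sub_one_le hq2 k) (by positivity)
end

section
/- Let q be a prime power, k > s ≥ 1, U a k-dimensional subspace of F_q^n, and U_1 a (k-s)-dimensional subspace of U. The number of l-dimensional subspaces V of F_q^n such that V ∩ U ⊆ U_1 and dim(V ∩ U) = j equals q^{(k-j)(l-j)} · [n-k choose l-j]_q · [k-s choose j]_q. -/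
/-- The Gaussian binomial coefficient `[m choose l]_q`, computed as
`((q^m-1)⋯(q^{m-l+1}-1)) / ((q^l-1)⋯(q-1))` (the division is exact). -/
def gaussBinomNat (q m l : ℕ) : ℕ :=
  (∏ i ∈ Finset.range l, (q ^ (m - i) - 1)) / (∏ i ∈ Finset.range l, (q ^ (l - i) - 1))

/-!
Sorting the subspaces `V` by `W = V ⊓ U`, which runs over the `j`-dimensional subspaces of `U₁`,
leaves fibres of constant size. Passing to `F^n ⧸ W` identifies the fibre over `W` with the
`(l - j)`-dimensional subspaces meeting the `(k - j)`-dimensional subspace `U ⧸ W` trivially.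
A subspace meets `A` trivially exactly when its ordered bases stay linearly independent modulo
`A`, so these subspaces are counted through such tuples: choosing the image modulo `A` and then
the lifts gives `q^{(dim A) r}` times the number of independent `r`-tuples in the quotient.
For `A = 0` this shows that `∏_{i<r} (q^r - q^i)` divides `∏_{i<r} (q^m - q^i)`, with quotient
the number of `r`-dimensional subspaces of `F^m`, which is therefore `gaussBinomNat q m r`.
-/

open Module Submodule

theorem Set.ncard_eq_ncard_mul_of_ncard_inter_preimage {α β : Type*} {s : Set α} {t : Set β}
    {f : α → β} (hf : Set.MapsTo f s t) {c : ℕ}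
    (hc : ∀ b ∈ t, (s ∩ f ⁻¹' {b}).ncard = c)
    (hs : s.Finite := by toFinite_tac) (ht : t.Finite := by toFinite_tac) :
    s.ncard = t.ncard * c := by
  classical
  obtain ⟨s, rfl⟩ := hs.exists_finset_coe
  obtain ⟨t, rfl⟩ := ht.exists_finset_coe
  have hfiber : ∀ b ∈ t, (s.filter (f · = b)).card = c := fun b hb => by
    rw [← hc b hb, ← Set.ncard_coe_finset, Finset.coe_filter]
    rfl
  rw [Set.ncard_coe_finset, Set.ncard_coe_finset, Finset.card_eq_sum_card_fiberwise hf,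
    Finset.sum_congr rfl hfiber, Finset.sum_const, smul_eq_mul]

theorem Nat.pow_sub_pow_eq_pow_mul {q : ℕ} (hq : 0 < q) (d i : ℕ) :
    q ^ d - q ^ i = q ^ i * (q ^ (d - i) - 1) := by
  rcases le_or_gt i d with h | h
  · rw [Nat.mul_sub, mul_one, ← pow_add, Nat.add_sub_cancel' h]
  · rw [Nat.sub_eq_zero_of_le h.le, pow_zero, Nat.sub_self, mul_zero,
      Nat.sub_eq_zero_of_le (Nat.pow_le_pow_right hq h.le)]

theorem gaussBinomNat_mul_prod_of_dvd {q d m : ℕ} (hq : 0 < q)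
    (h : ∏ i ∈ Finset.range m, (q ^ m - q ^ i) ∣ ∏ i ∈ Finset.range m, (q ^ d - q ^ i)) :
    gaussBinomNat q d m * ∏ i ∈ Finset.range m, (q ^ m - q ^ i) =
      ∏ i ∈ Finset.range m, (q ^ d - q ^ i) := by
  simp only [Nat.pow_sub_pow_eq_pow_mul hq _, Finset.prod_mul_distrib] at h ⊢
  have hpos : 0 < ∏ i ∈ Finset.range m, q ^ i := Finset.prod_pos fun i _ => pow_pos hq i
  rw [gaussBinomNat, mul_left_comm, Nat.div_mul_cancel (Nat.dvd_of_mul_dvd_mul_left hpos h)]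

namespace Submodule

variable {R M : Type*} [Ring R] [AddCommGroup M] [Module R M]

instance finite_quotient [Finite M] (A : Submodule R M) : Finite (M ⧸ A) :=
  Quotient.finite _

theorem card_mkQ_fiber (A : Submodule R M) (c : M ⧸ A) :
    Nat.card {x // A.mkQ x = c} = Nat.card A := by
  obtain ⟨x₀, rfl⟩ := A.mkQ_surjective c
  exact Nat.card_congr ((Equiv.subRight x₀).subtypeEquiv fun _ => Quotient.eq A)

theorem finrank_quotient_bot : finrank R (M ⧸ (⊥ : Submodule R M)) = finrank R M :=
  (quotEquivOfEqBot ⊥ rfl).finrank_eq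

theorem comap_mkQ_inf_eq_iff_disjoint {W U : Submodule R M} (hWU : W ≤ U)
    (V : Submodule R (M ⧸ W)) : comap W.mkQ V ⊓ U = W ↔ Disjoint V (U.map W.mkQ) := by
  rw [disjoint_iff, ← (comap_injective_of_surjective W.mkQ_surjective).eq_iff, comap_inf,
    comap_map_mkQ, sup_eq_right.2 hWU, comap_bot, ker_mkQ]

end Submodule

section FiniteModule

variable {F M : Type*} [DivisionRing F] [AddCommGroup M] [Module F M] [Finite M]

theorem finrank_comap_mkQ (W : Submodule F M) (V : Submodule F (M ⧸ W)) :
    finrank F (comap W.mkQ V) = finrank F V + finrank F W := by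
  have h := LinearMap.finrank_range_add_finrank_ker (W.mkQ.domRestrict (comap W.mkQ V))
  rwa [LinearMap.range_domRestrict, map_comap_eq_of_surjective W.mkQ_surjective,
    LinearMap.ker_domRestrict, ker_mkQ, (comapSubtypeEquivOfLe (le_comap_mkQ W V)).finrank_eq,
    eq_comm] at h

theorem ncard_linearIndependent_comp_mkQ (A : Submodule F M) (m : ℕ) :
    {s : Fin m → M | LinearIndependent F (A.mkQ ∘ s)}.ncard =
      {t : Fin m → M ⧸ A | LinearIndependent F t}.ncard * Nat.card A ^ m := by
  refine Set.ncard_eq_ncard_mul_of_ncard_inter_preimage (f := fun s : Fin m → M => A.mkQ ∘ s)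
    (t := {u | LinearIndependent F u}) ?_ fun t ht => ?_
  · exact fun _ hs => hs
  have hfiber : {s | LinearIndependent F (A.mkQ ∘ s)} ∩ (A.mkQ ∘ ·) ⁻¹' {t} =
      {s : Fin m → M | A.mkQ ∘ s = t} :=
    Set.inter_eq_right.2 fun s (hs : A.mkQ ∘ s = t) =>
      show LinearIndependent F (A.mkQ ∘ s) from hs ▸ ht
  rw [hfiber, ← Nat.card_coe_set_eq]
  calc Nat.card {s : Fin m → M // A.mkQ ∘ s = t}
      = Nat.card (∀ i, {x // A.mkQ x = t i}) :=
        Nat.card_congr <| (Equiv.subtypeEquivRight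
          (q := fun s : Fin m → M => ∀ i, A.mkQ (s i) = t i) fun _ => funext_iff).trans
          (Equiv.subtypePiEquivPi (p := fun i x => A.mkQ x = t i))
    _ = Nat.card A ^ m := by
      simp only [Nat.card_pi, card_mkQ_fiber, Finset.prod_const, Finset.card_univ, Fintype.card_fin]

variable [Fintype F]

theorem ncard_linearIndependent (k : ℕ) :
    {s : Fin k → M | LinearIndependent F s}.ncard =
      ∏ i ∈ Finset.range k, (Fintype.card F ^ finrank F M - Fintype.card F ^ i) := by
  rcases le_or_gt k (finrank F M) with hk | hk
  · rw [← Nat.card_coe_set_eq, ← Fin.prod_univ_eq_prod_range]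
    exact card_linearIndependent hk
  · rw [(Set.ncard_eq_zero).2, eq_comm]
    · exact Finset.prod_eq_zero (Finset.mem_range.2 hk) (Nat.sub_self _)
    refine Set.eq_empty_of_forall_notMem fun s hs => hk.not_ge ?_
    simpa using hs.fintype_card_le_finrank

theorem ncard_linearIndependent_comp_mkQ_eq_ncard_mul (A : Submodule F M) (m : ℕ) :
    {s : Fin m → M | LinearIndependent F (A.mkQ ∘ s)}.ncard =
      {V : Submodule F M | finrank F V = m ∧ Disjoint V A}.ncard *
        ∏ i ∈ Finset.range m, (Fintype.card F ^ m - Fintype.card F ^ i) := by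
  refine Set.ncard_eq_ncard_mul_of_ncard_inter_preimage
    (f := fun s : Fin m → M => span F (Set.range s)) (fun s hs => ?_) fun V hV => ?_
  · exact ⟨by simpa using finrank_span_eq_card hs.of_comp,
      by simpa using Submodule.range_ker_disjoint hs⟩
  obtain ⟨hVm, hVA⟩ := hV
  have hfiber :
      {s | LinearIndependent F (A.mkQ ∘ s)} ∩ (fun s => span F (Set.range s)) ⁻¹' {V} =
        (V.subtype ∘ ·) '' {t : Fin m → V | LinearIndependent F t} := by
    ext s
    constructor
    · rintro ⟨hs, hsV⟩
      have hmem : ∀ i, s i ∈ V := fun i => hsV ▸ subset_span ⟨i, rfl⟩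
      exact ⟨fun i => ⟨s i, hmem i⟩, hs.of_comp.of_comp V.subtype, rfl⟩
    · rintro ⟨t, ht, rfl⟩
      have hspan : span F (Set.range (V.subtype ∘ t)) = V := by
        rw [Set.range_comp, ← map_span, ht.span_eq_top_of_card_eq_finrank' (by simp [hVm]),
          map_subtype_top]
      refine ⟨(ht.map' V.subtype (ker_subtype V)).map ?_, hspan⟩
      rwa [hspan, ker_mkQ]
  rw [hfiber, Set.ncard_image_of_injective _ V.injective_subtype.comp_left,
    ncard_linearIndependent, hVm]

theorem ncard_finrank_eq_and_disjoint_mul_prod (A : Submodule F M) (m : ℕ) :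
    {V : Submodule F M | finrank F V = m ∧ Disjoint V A}.ncard *
        ∏ i ∈ Finset.range m, (Fintype.card F ^ m - Fintype.card F ^ i) =
      Fintype.card F ^ (finrank F A * m) *
        ∏ i ∈ Finset.range m, (Fintype.card F ^ finrank F (M ⧸ A) - Fintype.card F ^ i) := by
  rw [← ncard_linearIndependent_comp_mkQ_eq_ncard_mul, ncard_linearIndependent_comp_mkQ,
    ncard_linearIndependent, natCard_eq_pow_finrank (K := F), Nat.card_eq_fintype_card, pow_mul,
    mul_comm]

variable (F) in
theorem gaussBinomNat_card_mul_prod (d m : ℕ) :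
    gaussBinomNat (Fintype.card F) d m *
        ∏ i ∈ Finset.range m, (Fintype.card F ^ m - Fintype.card F ^ i) =
      ∏ i ∈ Finset.range m, (Fintype.card F ^ d - Fintype.card F ^ i) := by
  have h := ncard_finrank_eq_and_disjoint_mul_prod (⊥ : Submodule F (Fin d → F)) m
  simp only [finrank_bot, zero_mul, pow_zero, one_mul, finrank_quotient_bot, finrank_fin_fun] at h
  exact gaussBinomNat_mul_prod_of_dvd Fintype.card_pos (Dvd.intro_left _ h)

theorem ncard_finrank_eq_and_disjoint (A : Submodule F M) (m : ℕ) :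
    {V : Submodule F M | finrank F V = m ∧ Disjoint V A}.ncard =
      Fintype.card F ^ (finrank F A * m) *
        gaussBinomNat (Fintype.card F) (finrank F (M ⧸ A)) m := by
  have hpos : 0 < ∏ i ∈ Finset.range m, (Fintype.card F ^ m - Fintype.card F ^ i) :=
    Finset.prod_pos fun i hi =>
      Nat.sub_pos_of_lt (Nat.pow_lt_pow_right Fintype.one_lt_card (Finset.mem_range.1 hi))
  refine Nat.eq_of_mul_eq_mul_right hpos ?_
  rw [ncard_finrank_eq_and_disjoint_mul_prod, mul_assoc, gaussBinomNat_card_mul_prod]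

theorem ncard_finrank_eq (m : ℕ) :
    {V : Submodule F M | finrank F V = m}.ncard =
      gaussBinomNat (Fintype.card F) (finrank F M) m := by
  simpa [finrank_quotient_bot] using ncard_finrank_eq_and_disjoint (⊥ : Submodule F M) m

theorem ncard_le_and_finrank_eq (P : Submodule F M) (j : ℕ) :
    {W : Submodule F M | W ≤ P ∧ finrank F W = j}.ncard =
      gaussBinomNat (Fintype.card F) (finrank F P) j := by
  have himage : {W : Submodule F M | W ≤ P ∧ finrank F W = j} =
      map P.subtype '' {W' : Submodule F P | finrank F W' = j} := by
    ext W
    constructor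
    · rintro ⟨hWP, rfl⟩
      have hmap : map P.subtype (comap P.subtype W) = W := by
        rw [map_comap_subtype, inf_eq_right.2 hWP]
      refine ⟨comap P.subtype W, ?_, hmap⟩
      rw [Set.mem_ofPred_eq, ← finrank_map_subtype_eq, hmap]
    · rintro ⟨W', rfl, rfl⟩
      exact ⟨map_subtype_le _ _, finrank_map_subtype_eq _ _⟩
  rw [himage, Set.ncard_image_of_injective _ (map_injective_of_injective P.injective_subtype),
    ncard_finrank_eq]

theorem ncard_finrank_eq_and_inf_eq {U W : Submodule F M} (hWU : W ≤ U) {l : ℕ}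
    (hl : finrank F W ≤ l) :
    {V : Submodule F M | finrank F V = l ∧ V ⊓ U = W}.ncard =
      Fintype.card F ^ ((finrank F U - finrank F W) * (l - finrank F W)) *
        gaussBinomNat (Fintype.card F) (finrank F M - finrank F U) (l - finrank F W) := by
  have himage : {V : Submodule F M | finrank F V = l ∧ V ⊓ U = W} =
      comap W.mkQ '' {V' | finrank F V' = l - finrank F W ∧ Disjoint V' (U.map W.mkQ)} := by
    ext V
    constructor
    · rintro ⟨hV, hVU⟩
      have hcomap : comap W.mkQ (map W.mkQ V) = V := by
        rw [comap_map_mkQ, sup_eq_right.2 (hVU ▸ inf_le_left)]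
      have hrank := finrank_comap_mkQ W (map W.mkQ V)
      rw [hcomap] at hrank
      refine ⟨map W.mkQ V, ⟨by omega, ?_⟩, hcomap⟩
      rwa [← comap_mkQ_inf_eq_iff_disjoint hWU, hcomap]
    · rintro ⟨V', ⟨hV', hV'U⟩, rfl⟩
      refine ⟨?_, (comap_mkQ_inf_eq_iff_disjoint hWU V').2 hV'U⟩
      rw [finrank_comap_mkQ, hV']
      omega
  have hUW : finrank F (U.map W.mkQ) = finrank F U - finrank F W := by
    have h := finrank_comap_mkQ W (U.map W.mkQ)
    rw [comap_map_mkQ, sup_eq_right.2 hWU] at h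
    omega
  have hquot : finrank F ((M ⧸ W) ⧸ U.map W.mkQ) = finrank F M - finrank F U := by
    have h₁ := finrank_quotient_add_finrank (U.map W.mkQ)
    have h₂ := finrank_quotient_add_finrank W
    have h₃ := finrank_le U
    have h₄ := finrank_mono hWU
    omega
  rw [himage, Set.ncard_image_of_injective _ (comap_injective_of_surjective W.mkQ_surjective),
    ncard_finrank_eq_and_disjoint, hUW, hquot]

end FiniteModule

theorem stmt5_general (q n k s l j : ℕ) (F : Type*) [Field F] [Fintype F]
    (hF : Fintype.card F = q)
    (U U₁ : Submodule F (Fin n → F)) (hU : Module.finrank F U = k)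
    (hU₁U : U₁ ≤ U) (hU₁ : Module.finrank F U₁ = k - s)
    (hjl : j ≤ l) :
    Set.ncard {V : Submodule F (Fin n → F) |
        Module.finrank F V = l ∧ V ⊓ U ≤ U₁ ∧ Module.finrank F (V ⊓ U : Submodule F (Fin n → F)) = j} =
      q ^ ((k - j) * (l - j)) * gaussBinomNat q (n - k) (l - j) * gaussBinomNat q (k - s) j := by
  subst hF
  refine (Set.ncard_eq_ncard_mul_of_ncard_inter_preimage (f := (· ⊓ U))
    (t := {W | W ≤ U₁ ∧ finrank F W = j})
    (c := Fintype.card F ^ ((k - j) * (l - j)) * gaussBinomNat (Fintype.card F) (n - k) (l - j))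
    ?_ ?_).trans ?_
  · exact fun V hV => hV.2
  · rintro W ⟨hWU₁, rfl⟩
    have h := ncard_finrank_eq_and_inf_eq (hWU₁.trans hU₁U) hjl
    rw [hU, finrank_fin_fun] at h
    convert h using 2
    ext V
    exact ⟨fun ⟨⟨hV, _⟩, hVU⟩ => ⟨hV, hVU⟩,
      fun ⟨hV, hVU⟩ => ⟨⟨hV, hVU ▸ hWU₁, by rw [hVU]⟩, hVU⟩⟩
  · rw [ncard_le_and_finrank_eq, hU₁]
    ring

theorem stmt5 (q n k s l j : ℕ) (F : Type*) [Field F] [Fintype F]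
    (hq : IsPrimePow q) (hF : Fintype.card F = q)
    (hs : 1 ≤ s) (hsk : s < k)
    (U U₁ : Submodule F (Fin n → F)) (hU : Module.finrank F U = k)
    (hU₁U : U₁ ≤ U) (hU₁ : Module.finrank F U₁ = k - s)
    (hjl : j ≤ l) (hjks : j ≤ k - s) (hlj : l - j ≤ n - k) :
    Set.ncard {V : Submodule F (Fin n → F) |
        Module.finrank F V = l ∧ V ⊓ U ≤ U₁ ∧ Module.finrank F (V ⊓ U : Submodule F (Fin n → F)) = j} =
      q ^ ((k - j) * (l - j)) * gaussBinomNat q (n - k) (l - j) * gaussBinomNat q (k - s) j :=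
  stmt5_general q n k s l j F hF U U₁ hU hU₁U hU₁ hjl
end

section
/- Let n, u, v be positive integers with uv ≤ n. Then S(n,u,v) ≤ ⌊ ln C(n,uv) / (−ln(1 − ∏_{i=1}^{v} C((v−i+1)u, u)/v^u)) ⌋ + 1, where S(n,u,v) is the minimum number of v-partitions of [n] needed so that every uv-subset of [n] is covered by at least one of them. -/
/-- A `v`-partition of `[n]`, viewed as a function `x : Fin n → Fin v` (parts may be empty),
covers a `uv`-subset `I` if each part meets `I` in exactly `u` elements. -/
def Covers {n v : ℕ} (u : ℕ) (x : Fin n → Fin v) (I : Finset (Fin n)) : Prop :=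
  ∀ i : Fin v, (I.filter fun j => x j = i).card = u

/-- `S n u v`: the minimum number of `v`-partitions of `[n]` needed so that every
`uv`-subset of `[n]` is covered by at least one of them. -/
noncomputable def Spart (n u v : ℕ) : ℕ :=
  sInf {m : ℕ | ∃ P : Finset (Fin n → Fin v), P.card = m ∧
    ∀ I : Finset (Fin n), I.card = u * v → ∃ x ∈ P, Covers u x I}

/-
A uniformly random map `[n] → [v]` covers a fixed `uv`-set `I` with probability
`p = ∏ C((v-i)u, u) / v^u`, because `∏ C((v-i)u, u)` counts the maps `I → [v]` all of whose
fibres have size `u` (choose the fibres one after another) out of `v^(uv)` maps in all. For `m`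
independent maps the expected number of uncovered `uv`-sets is `C(n, uv) (1 - p)^m`, which is
below `1` once `m = ⌊ln C(n, uv) / -ln(1 - p)⌋ + 1`, so some `m` maps cover every `uv`-set.
The expectation argument is run as a union bound over `m`-tuples of maps.
-/

open Finset

section Balanced

variable {α ι ι' : Type*}

def IsBalanced (u : ℕ) (f : α → ι) : Prop :=
  ∀ i, Nat.card (f ⁻¹' {i}) = u

lemma isBalanced_equiv_comp_iff (u : ℕ) (e : ι ≃ ι') (f : α → ι) :
    IsBalanced u (e ∘ f) ↔ IsBalanced u f := by
  refine (e.forall_congr_right (q := fun i => Nat.card ((e ∘ f) ⁻¹' {i}) = u)).symm.trans ?_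
  simp only [Set.preimage_comp, ← Set.image_singleton, e.preimage_image]
  rfl

lemma card_isBalanced_congr_right (u : ℕ) (e : ι ≃ ι') :
    Nat.card {f : α → ι // IsBalanced u f} = Nat.card {f : α → ι' // IsBalanced u f} :=
  Nat.card_congr <| (Equiv.arrowCongr (Equiv.refl α) e).subtypeEquiv fun f =>
    (isBalanced_equiv_comp_iff u e f).symm

lemma Set.ncard_preimage_val (s t : Set α) :
    (Subtype.val ⁻¹' t : Set s).ncard = (s ∩ t).ncard := by
  rw [← Subtype.image_preimage_coe, Set.ncard_image_of_injective _ Subtype.val_injective]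

open Classical in
noncomputable def arrowOptionEquivCompl (T : Set α) :
    {f : α → Option ι // f ⁻¹' {none} = T} ≃ (↥Tᶜ → ι) where
  toFun f b :=
    (f.1 b).get (Option.isSome_iff_ne_none.2 fun h => b.2 ((Set.ext_iff.1 f.2 b).1 h))
  invFun g :=
    ⟨fun a => if h : a ∈ T then none else some (g ⟨a, h⟩), by ext a; by_cases a ∈ T <;> simp [*]⟩
  left_inv f := by
    ext1; funext a
    by_cases h : a ∈ T
    · have : f.1 a = none := (Set.ext_iff.1 f.2 a).2 h
      simp [h, this]
    · simp [h]
  right_inv g := by funext b; simp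

lemma preimage_arrowOptionEquivCompl {T : Set α} (f : {f : α → Option ι // f ⁻¹' {none} = T})
    (i : ι) :
    arrowOptionEquivCompl T f ⁻¹' {i} = Subtype.val ⁻¹' (f.1 ⁻¹' {some i}) := by
  ext b
  simp only [arrowOptionEquivCompl, Equiv.coe_fn_mk, Set.mem_preimage, Set.mem_singleton_iff,
    Option.eq_some_iff_get_eq]
  exact ⟨fun h => ⟨_, h⟩, fun ⟨_, h⟩ => h⟩

lemma isBalanced_arrowOptionEquivCompl_iff {u : ℕ} {T : Set α} (hT : T.ncard = u)
    (f : {f : α → Option ι // f ⁻¹' {none} = T}) :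
    IsBalanced u (arrowOptionEquivCompl T f) ↔ IsBalanced u f.1 := by
  have hsub : ∀ i, f.1 ⁻¹' {some i} ⊆ Tᶜ := fun i a ha haT => by
    simp_all [← Set.ext_iff.1 f.2 a]
  simp only [IsBalanced, Option.forall, f.2, Nat.card_coe_set_eq, hT, true_and,
    preimage_arrowOptionEquivCompl, Set.ncard_preimage_val, Set.inter_eq_right.2 (hsub _)]

lemma Nat.card_eq_mul_of_card_fiber {X Y : Type*} [Finite X] [Finite Y] (F : X → Y) {N : ℕ}
    (hF : ∀ y, Nat.card {x // F x = y} = N) : Nat.card X = Nat.card Y * N := by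
  have := Fintype.ofFinite Y
  rw [← Nat.card_congr (Equiv.sigmaFiberEquiv F), Nat.card_sigma]
  simp [hF, Nat.card_eq_fintype_card]

lemma Nat.card_setOf_ncard_eq [Finite α] (k : ℕ) :
    Nat.card {T : Set α // T.ncard = k} = (Nat.card α).choose k := by
  rw [← Set.ncard_univ α, ← Set.ncard_powerset_ncard Set.finite_univ]
  simp only [Set.subset_univ, true_and]
  rfl

lemma card_isBalanced_option [Finite α] [Finite ι] {u N : ℕ}
    (h : ∀ T : Set α, T.ncard = u → Nat.card {g : ↥Tᶜ → ι // IsBalanced u g} = N) :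
    Nat.card {f : α → Option ι // IsBalanced u f} = (Nat.card α).choose u * N := by
  let F (f : {f : α → Option ι // IsBalanced u f}) : {T : Set α // T.ncard = u} :=
    ⟨f.1 ⁻¹' {none}, f.2 none⟩
  rw [Nat.card_eq_mul_of_card_fiber F, Nat.card_setOf_ncard_eq]
  rintro ⟨T, hT⟩
  rw [← h T hT]
  refine Nat.card_congr <| (Equiv.subtypeEquivRight fun f => ?_).trans <|
    (Equiv.subtypeSubtypeEquivSubtypeInter (IsBalanced u) (fun f => f ⁻¹' {none} = T)).trans <|
    (Equiv.subtypeEquivRight fun f => and_comm).trans <|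
    (Equiv.subtypeSubtypeEquivSubtypeInter (fun f => f ⁻¹' {none} = T) (IsBalanced u)).symm.trans <|
    (arrowOptionEquivCompl T).subtypeEquiv fun f => (isBalanced_arrowOptionEquivCompl_iff hT f).symm
  exact Subtype.ext_iff

lemma prod_choose_succ (u k : ℕ) :
    ∏ i ∈ range (k + 1), ((k + 1 - i) * u).choose u
      = (u * (k + 1)).choose u * ∏ i ∈ range k, ((k - i) * u).choose u := by
  rw [prod_range_succ', mul_comm, Nat.sub_zero, mul_comm u]
  simp only [Nat.add_sub_add_right]

universe u₁ u₂ in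
theorem card_isBalanced (u : ℕ) (ι : Type u₁) [Fintype ι] (α : Type u₂) [Finite α]
    (hα : Nat.card α = u * Nat.card ι) :
    Nat.card {f : α → ι // IsBalanced u f}
      = ∏ i ∈ range (Nat.card ι), ((Nat.card ι - i) * u).choose u := by
  refine Fintype.induction_empty_option (P := fun ι _ => ∀ (α : Type u₂) [Finite α],
    Nat.card α = u * Nat.card ι → Nat.card {f : α → ι // IsBalanced u f}
      = ∏ i ∈ range (Nat.card ι), ((Nat.card ι - i) * u).choose u) ?_ ?_ ?_ ι α hα
  · intro ι ι' _ e ih α _ hα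
    rw [← card_isBalanced_congr_right u e, ← Nat.card_congr e]
    exact ih α (by rwa [Nat.card_congr e])
  · intro α _ hα
    have : IsEmpty α := Finite.card_eq_zero_iff.mp (by simpa using hα)
    simp [IsBalanced]
  · intro ι _ ih α _ hα
    rw [Finite.card_option] at hα ⊢
    have hcompl (T : Set α) (hT : T.ncard = u) : Nat.card ↥Tᶜ = u * Nat.card ι := by
      rw [Nat.card_coe_set_eq, Set.ncard_compl, hα, hT, mul_add_one, Nat.add_sub_cancel]
    rw [prod_choose_succ, card_isBalanced_option fun T hT => ih _ (hcompl T hT), hα]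

lemma card_isBalanced_restrict [Finite α] [Finite ι] (u : ℕ) (s : Set α) :
    Nat.card {f : α → ι // IsBalanced u (s.domRestrict f)}
      = Nat.card {g : s → ι // IsBalanced u g} * Nat.card ι ^ sᶜ.ncard := by
  classical
  rw [← Nat.card_coe_set_eq, ← Nat.card_fun, ← Nat.card_prod]
  exact Nat.card_congr <| ((Equiv.piEquivPiSubtypeProd (· ∈ s) fun _ => ι).subtypeEquiv
    fun _ => Iff.rfl).trans Equiv.prodSubtypeFstEquivSubtypeProd

end Balanced

lemma exists_tuple_forall_exists_of_card_mul_pow_lt {α κ : Type*} [Finite α] (s : Finset κ)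
    (P : κ → α → Prop) {b m : ℕ} (hb : ∀ k ∈ s, Nat.card {x // ¬ P k x} ≤ b)
    (h : #s * b ^ m < Nat.card α ^ m) : ∃ t : Fin m → α, ∀ k ∈ s, ∃ j, P k (t j) := by
  classical
  have := Fintype.ofFinite α
  by_contra! hc
  let bad (k : κ) : Finset (Fin m → α) := {t | ∀ j, ¬ P k (t j)}
  have hbad : ∀ k ∈ s, #(bad k) ≤ b ^ m := fun k hk => by
    rw [← Fintype.card_subtype, ← Nat.card_eq_fintype_card,
      Nat.card_congr (Equiv.subtypePiEquivPi (β := fun _ : Fin m => α) (p := fun _ x => ¬ P k x)),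
      Nat.card_fun, Nat.card_fin]
    exact Nat.pow_le_pow_left (hb k hk) m
  have hcover : univ ⊆ s.biUnion bad := fun t _ => by
    obtain ⟨k, hk, ht⟩ := hc t
    exact mem_biUnion.2 ⟨k, hk, mem_filter.2 ⟨mem_univ t, ht⟩⟩
  have := (card_le_card hcover).trans (card_biUnion_le_card_mul s bad _ hbad)
  rw [card_univ, Fintype.card_fun, Fintype.card_fin, ← Nat.card_eq_fintype_card] at this
  omega

/-- For `q = 0` the exponent is `1`, since `Real.log 0 = 0` and division by `0` is `0`. -/
lemma mul_pow_floor_log_div_add_one_lt_one {C q : ℝ} (hC : 0 ≤ C) (hq₀ : 0 ≤ q) (hq₁ : q < 1) :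
    C * q ^ (⌊Real.log C / -Real.log q⌋₊ + 1) < 1 := by
  set m := ⌊Real.log C / -Real.log q⌋₊ + 1
  rcases hC.eq_or_lt with rfl | hC
  · simp
  rcases hq₀.eq_or_lt with rfl | hq₀
  · simp [m]
  have hd : 0 < -Real.log q := neg_pos.2 (Real.log_neg hq₀ hq₁)
  have hm : Real.log C < m * -Real.log q :=
    (div_lt_iff₀ hd).1 (by simpa [m] using Nat.lt_floor_add_one (Real.log C / -Real.log q))
  rw [← Real.log_neg_iff (by positivity), Real.log_mul hC.ne' (by positivity), Real.log_pow]
  linarith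

section Covers

variable {n u v : ℕ}

lemma covers_iff_isBalanced_domRestrict (x : Fin n → Fin v) (I : Finset (Fin n)) :
    Covers u x I ↔ IsBalanced u ((I : Set (Fin n)).domRestrict x) := by
  refine forall_congr' fun _ => ?_
  rw [← Set.ncard_coe_finset, coe_filter]
  exact Eq.congr_left (Set.ncard_preimage_val _ _).symm

lemma card_covers {I : Finset (Fin n)} (hI : #I = u * v) :
    Nat.card {x : Fin n → Fin v // Covers u x I}
      = (∏ i ∈ range v, ((v - i) * u).choose u) * v ^ (n - u * v) := by
  rw [Nat.card_congr (Equiv.subtypeEquivRight fun x => covers_iff_isBalanced_domRestrict x I),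
    card_isBalanced_restrict, card_isBalanced u (Fin v) _ (by simp [hI]), Nat.card_fin,
    Set.ncard_compl, Set.ncard_coe_finset, hI, Nat.card_fin]

lemma card_not_covers {I : Finset (Fin n)} (hI : #I = u * v) :
    Nat.card {x : Fin n → Fin v // ¬ Covers u x I}
      = v ^ n - (∏ i ∈ range v, ((v - i) * u).choose u) * v ^ (n - u * v) := by
  calc _ = Nat.card (Fin n → Fin v) - Nat.card {x // Covers u x I} :=
        Set.ncard_compl {x | Covers u x I}
    _ = _ := by rw [card_covers hI, Nat.card_fun, Nat.card_fin, Nat.card_fin]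

lemma spart_le_of_forall_exists_covers {m : ℕ} (t : Fin m → Fin n → Fin v)
    (ht : ∀ I : Finset (Fin n), #I = u * v → ∃ j, Covers u (t j) I) : Spart n u v ≤ m := by
  unfold Spart
  refine (Nat.sInf_le (Set.mem_ofPred.2 ⟨univ.image t, rfl, fun I hI => ?_⟩)).trans
    (card_image_le.trans_eq (by simp))
  obtain ⟨j, hj⟩ := ht I hI
  exact ⟨t j, mem_image_of_mem t (mem_univ j), hj⟩

end Covers

lemma prod_choose_pos (u v : ℕ) : 0 < ∏ i ∈ range v, ((v - i) * u).choose u :=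
  prod_pos fun _ hi =>
    Nat.choose_pos (Nat.le_mul_of_pos_left u (Nat.sub_pos_of_lt (mem_range.1 hi)))

lemma prod_choose_le_pow (u v : ℕ) : ∏ i ∈ range v, ((v - i) * u).choose u ≤ v ^ (u * v) := by
  have := Finite.card_subtype_le (IsBalanced u : (Fin (u * v) → Fin v) → Prop)
  rwa [card_isBalanced u (Fin v) _ (by simp), Nat.card_fun, Nat.card_fin, Nat.card_fin] at this

lemma prod_choose_div_pow (u v : ℕ) :
    ∏ i ∈ range v, (((v - i) * u).choose u : ℝ) / (v : ℝ) ^ u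
      = (∏ i ∈ range v, ((v - i) * u).choose u : ℕ) / (v : ℝ) ^ (u * v) := by
  simp only [prod_div_distrib, prod_const, card_range, ← pow_mul, mul_comm u v, Nat.cast_prod]

lemma prod_choose_div_pow_pos (u v : ℕ) :
    0 < ∏ i ∈ range v, (((v - i) * u).choose u : ℝ) / (v : ℝ) ^ u :=
  prod_pos fun i hi => by
    have hiv := mem_range.1 hi
    have := Nat.choose_pos (Nat.le_mul_of_pos_left u (Nat.sub_pos_of_lt hiv))
    have : 0 < v := i.zero_le.trans_lt hiv
    positivity

lemma prod_choose_div_pow_le_one (u v : ℕ) :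
    ∏ i ∈ range v, (((v - i) * u).choose u : ℝ) / (v : ℝ) ^ u ≤ 1 := by
  have hG := prod_choose_le_pow u v
  have hpos : (0 : ℝ) < (v : ℝ) ^ (u * v) := by
    exact_mod_cast (prod_choose_pos u v).trans_le hG
  rw [prod_choose_div_pow, div_le_one hpos]
  exact_mod_cast hG

lemma choose_mul_pow_lt_pow {n u v m : ℕ} (hv : 1 ≤ v) (huv : u * v ≤ n)
    (h : (n.choose (u * v) : ℝ) *
      (1 - ∏ i ∈ range v, (((v - i) * u).choose u : ℝ) / (v : ℝ) ^ u) ^ m < 1) :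
    n.choose (u * v) * (v ^ n - (∏ i ∈ range v, ((v - i) * u).choose u) * v ^ (n - u * v)) ^ m
      < (v ^ n) ^ m := by
  rw [prod_choose_div_pow] at h
  set G := ∏ i ∈ range v, ((v - i) * u).choose u
  have hvpos : (0 : ℝ) < v := by exact_mod_cast hv
  have hGv : G * v ^ (n - u * v) ≤ v ^ n := by
    rw [← Nat.add_sub_cancel' huv, pow_add, Nat.add_sub_cancel_left]
    exact Nat.mul_le_mul_right _ (prod_choose_le_pow u v)
  have hbad : ((v ^ n - G * v ^ (n - u * v) : ℕ) : ℝ)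
      = (1 - G / (v : ℝ) ^ (u * v)) * (v : ℝ) ^ n := by
    push_cast [Nat.cast_sub hGv]
    rw [← Nat.add_sub_cancel' huv, pow_add, Nat.add_sub_cancel_left]
    field_simp
  have : (n.choose (u * v) : ℝ) * ((v ^ n - G * v ^ (n - u * v) : ℕ) : ℝ) ^ m
      < ((v : ℝ) ^ n) ^ m := by
    rw [hbad, mul_pow, ← mul_assoc]
    exact mul_lt_of_lt_one_left (by positivity) h
  exact_mod_cast this

theorem stmt9_general (n u v : ℕ) (hv : 1 ≤ v) (huv : u * v ≤ n) :
    Spart n u v ≤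
      ⌊Real.log (n.choose (u * v)) /
          (-Real.log (1 - ∏ i ∈ Finset.range v, (((v - i) * u).choose u : ℝ) / (v : ℝ) ^ u))⌋₊ + 1 := by
  have hsmall := mul_pow_floor_log_div_add_one_lt_one (n.choose (u * v)).cast_nonneg
    (sub_nonneg.2 (prod_choose_div_pow_le_one u v)) (sub_lt_self 1 (prod_choose_div_pow_pos u v))
  obtain ⟨t, ht⟩ := exists_tuple_forall_exists_of_card_mul_pow_lt (powersetCard (u * v) univ)
    (fun I x => Covers u x I) (fun I hI => (card_not_covers (mem_powersetCard.1 hI).2).le)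
    (by simpa only [card_powersetCard, card_univ, Fintype.card_fin, Nat.card_fun, Nat.card_fin]
      using choose_mul_pow_lt_pow hv huv hsmall)
  exact spart_le_of_forall_exists_covers t fun I hI => ht I (mem_powersetCard.2 ⟨subset_univ I, hI⟩)

theorem stmt9 (n u v : ℕ) (hu : 1 ≤ u) (hv : 1 ≤ v) (huv : u * v ≤ n) :
    Spart n u v ≤
      ⌊Real.log (n.choose (u * v)) /
          (-Real.log (1 - ∏ i ∈ Finset.range v, (((v - i) * u).choose u : ℝ) / (v : ℝ) ^ u))⌋₊ + 1 :=
  stmt9_general n u v hv huv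
end

section
/- For positive integers r, u, v with v ≥ 2 and r ≥ v−1, the following holds: C(r+2u+1−v, 2u) + Σ_{i=1}^{u} C(r+2u+1−(v+i), 2u−i)·C(v+i−3, i) ≤ C(r+u−1, u) · C(r+u+1−v, u). -/
/-!
Put `n = r + 2 - v` and `w = v - 2`, so that every binomial coefficient in the statement is a
multiset count `multichoose`: the left side is `∑_{i ≤ u} mc(w, i) mc(n, 2u - i)`, which counts
monomials of degree `2u` in `w + n` variables having degree at least `u` in the last `n`, and the
right side is `mc(w + n, u) mc(n, u)`. Submultiplicativity `mc(n, u + j) ≤ mc(n, j) mc(n, u)`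
followed by Vandermonde's identity `∑_{i + j = u} mc(w, i) mc(n, j) = mc(w + n, u)` gives the bound.
-/

open Finset Nat

namespace Nat

theorem multichoose_add (a b k : ℕ) :
    (a + b).multichoose k = ∑ p ∈ antidiagonal k, a.multichoose p.1 * b.multichoose p.2 := by
  induction a generalizing k with
  | zero =>
    cases k with
    | zero => simp
    | succ k => simp [Nat.sum_antidiagonal_succ]
  | succ a iha =>
    induction k with
    | zero => simp
    | succ k ihk =>
      rw [Nat.sum_antidiagonal_succ]
      simp only [multichoose_succ_succ, add_mul, sum_add_distrib]
      rw [← ihk, add_right_comm a 1 b, multichoose_succ_succ, iha, Nat.sum_antidiagonal_succ]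
      simp only [multichoose_zero_right]
      ring

theorem choose_add_add_le (a b m : ℕ) :
    (a + b + m).choose m ≤ (a + m).choose m * (b + m).choose m := by
  have hprod : (1 : ℕ).ascFactorial m * (a + b + 1).ascFactorial m ≤
      (a + 1).ascFactorial m * (b + 1).ascFactorial m := by
    simp only [ascFactorial_eq_prod_range, ← prod_mul_distrib]
    exact prod_le_prod' fun t _ => by nlinarith
  rw [one_ascFactorial, ascFactorial_eq_factorial_mul_choose, ascFactorial_eq_factorial_mul_choose,
    ascFactorial_eq_factorial_mul_choose] at hprod
  have hpos : 0 < m ! * m ! := by positivity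
  refine le_of_mul_le_mul_left ?_ hpos
  calc m ! * m ! * (a + b + m).choose m = m ! * (m ! * (a + b + m).choose m) := by ring
    _ ≤ m ! * (a + m).choose m * (m ! * (b + m).choose m) := hprod
    _ = m ! * m ! * ((a + m).choose m * (b + m).choose m) := by ring

theorem multichoose_add_le_mul (n i j : ℕ) :
    n.multichoose (i + j) ≤ n.multichoose i * n.multichoose j := by
  cases n with
  | zero => cases i <;> cases j <;> simp [← add_assoc]
  | succ m =>
    simp only [multichoose_eq, add_tsub_cancel_right, add_right_comm m 1, ← add_assoc m]
    rw [choose_symm_of_eq_add (by ring : m + i + j = i + j + m), choose_symm_of_eq_add (add_comm m i),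
      choose_symm_of_eq_add (add_comm m j)]
    simpa only [add_comm _ m, add_assoc] using choose_add_add_le i j m

theorem sum_antidiagonal_multichoose_mul_le (w n u : ℕ) :
    ∑ p ∈ antidiagonal u, w.multichoose p.1 * n.multichoose (u + p.2) ≤
      (w + n).multichoose u * n.multichoose u := by
  calc ∑ p ∈ antidiagonal u, w.multichoose p.1 * n.multichoose (u + p.2)
      ≤ ∑ p ∈ antidiagonal u, w.multichoose p.1 * n.multichoose p.2 * n.multichoose u := by
        refine sum_le_sum fun p _ => ?_
        rw [mul_assoc, add_comm u]
        exact Nat.mul_le_mul_left _ (multichoose_add_le_mul n p.2 u)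
    _ = (w + n).multichoose u * n.multichoose u := by rw [← sum_mul, multichoose_add]

end Nat

theorem stmt14_general (r u v : ℕ) (hv : 2 ≤ v) (hr : v - 1 ≤ r) :
    (r + 2 * u + 1 - v).choose (2 * u) +
        ∑ i ∈ Finset.Icc 1 u, (r + 2 * u + 1 - (v + i)).choose (2 * u - i) * (v + i - 3).choose i ≤
      (r + u - 1).choose u * (r + u + 1 - v).choose u := by
  obtain ⟨w, n, hn, rfl, rfl⟩ : ∃ w n, 1 ≤ n ∧ r = w + n ∧ v = w + 2 :=
    ⟨v - 2, r + 2 - v, by omega, by omega, by omega⟩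
  have hlhs : (w + n + 2 * u + 1 - (w + 2)).choose (2 * u) + ∑ i ∈ Icc 1 u,
      (w + n + 2 * u + 1 - (w + 2 + i)).choose (2 * u - i) * (w + 2 + i - 3).choose i =
      ∑ p ∈ antidiagonal u, w.multichoose p.1 * n.multichoose (u + p.2) := by
    rw [Nat.sum_antidiagonal_eq_sum_range_succ (fun i j => w.multichoose i * n.multichoose (u + j)),
      range_eq_Ico, sum_eq_sum_Ico_succ_bot u.succ_pos, zero_add, Nat.succ_eq_add_one,
      Ico_add_one_right_eq_Icc]
    refine congrArg₂ _ ?_ (sum_congr rfl fun i hi => ?_)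
    · rw [multichoose_zero_right, one_mul, multichoose_eq]
      congr 1 <;> omega
    · rw [mem_Icc] at hi
      rw [multichoose_eq, multichoose_eq, mul_comm]
      congr 2 <;> omega
  have hrhs : (w + n + u - 1).choose u * (w + n + u + 1 - (w + 2)).choose u =
      (w + n).multichoose u * n.multichoose u := by
    rw [multichoose_eq, multichoose_eq]
    congr 2; omega
  rw [hlhs, hrhs]
  exact sum_antidiagonal_multichoose_mul_le w n u

theorem stmt14 (r u v : ℕ) (hu : 1 ≤ u) (hv : 2 ≤ v) (hr : v - 1 ≤ r) :
    (r + 2 * u + 1 - v).choose (2 * u) +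
        ∑ i ∈ Finset.Icc 1 u, (r + 2 * u + 1 - (v + i)).choose (2 * u - i) * (v + i - 3).choose i ≤
      (r + u - 1).choose u * (r + u + 1 - v).choose u :=
  stmt14_general r u v hv hr
end

section
/- Let S = {v_1,…,v_s} be s distinct nonzero vectors in F_2^n with dim(span S) ≥ 2, and let d = dim(span S). Consider the s-partite graph G_S whose j-th vertex part V_j consists of the 2^{d−1} cosets x + ⟨v_j⟩ with x ∈ ⟨S⟩/⟨v_j⟩, with an edge between two cosets (from different parts) iff they intersect as subsets of ⟨S⟩. Then for any nonnegative integers b_1,…,b_s with Σ b_j = 2^{d−2}, G_S has an independent set A with |A ∩ V_j| = b_j for every j. -/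
/-!
Greedy choice: a pair `{x, x + u}` is blocked by an already chosen pair `P` only when `x ∈ P`
or `x + u ∈ P`, so `m` chosen pairs block at most `4 m` points of `⟨S⟩`. Since `⟨S⟩` has
`2 ^ d = 4 · 2 ^ (d - 2)` points, one more pair can be placed as long as fewer than
`2 ^ (d - 2)` have been chosen.
-/

open Finset

section GreedyPairs

variable {G ι : Type*} [AddGroup G] [DecidableEq G]

lemma disjoint_pair_of_notMem {U : Finset G} {x u : G} (hx : x ∉ U) (hxu : x + u ∉ U) :
    Disjoint ({x, x + u} : Finset G) U := by
  simp [disjoint_insert_left, hx, hxu]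

lemma card_filter_mem_or_add_mem_le (W U : Finset G) (u : G) :
    #{x ∈ W | x ∈ U ∨ x + u ∈ U} ≤ 2 * #U := calc
  #{x ∈ W | x ∈ U ∨ x + u ∈ U} ≤ #(U ∪ U.image (· - u)) := by
    refine card_le_card fun x hx ↦ ?_
    obtain ⟨-, hxU | hxU⟩ := mem_filter.mp hx
    · exact mem_union_left _ hxU
    · exact mem_union_right _ (mem_image.mpr ⟨x + u, hxU, add_sub_cancel_right x u⟩)
  _ ≤ #U + #U := (card_union_le _ _).trans (Nat.add_le_add_left card_image_le _)
  _ = 2 * #U := (two_mul _).symm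

-- `4 * #F < #W + 4` is `4 * (#F - 1) < #W` without truncated subtraction.
lemma exists_pairwiseDisjoint_pairs (W : Finset G) (u : ι → G) (F : Finset ι)
    (hF : 4 * #F < #W + 4) :
    ∃ g : ι → G, (∀ t ∈ F, g t ∈ W) ∧
      (F : Set ι).PairwiseDisjoint fun t ↦ ({g t, g t + u t} : Finset G) := by
  classical
  induction F using Finset.induction_on with
  | empty => exact ⟨0, by simp, by simp⟩
  | @insert a F haF ih =>
    rw [card_insert_of_notMem haF] at hF
    obtain ⟨g, hgW, hg⟩ := ih (by omega)
    set U := F.biUnion fun t ↦ ({g t, g t + u t} : Finset G)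
    have hU : #U ≤ 2 * #F :=
      (card_biUnion_le_card_mul _ _ 2 fun _ _ ↦ card_le_two).trans_eq (mul_comm _ _)
    have hblocked : #{x ∈ W | x ∈ U ∨ x + u a ∈ U} < #W := by
      have := card_filter_mem_or_add_mem_le W U (u a)
      omega
    obtain ⟨x, hxW, hx⟩ := exists_mem_notMem_of_card_lt_card hblocked
    rw [mem_filter, not_and, not_or] at hx
    obtain ⟨hxU, hxuU⟩ := hx hxW
    have hupdate : ∀ t ∈ F, Function.update g a x t = g t := fun t ht ↦
      Function.update_of_ne (ne_of_mem_of_not_mem ht haF) _ _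
    refine ⟨Function.update g a x, ?_, ?_⟩
    · intro t ht
      obtain rfl | ht := mem_insert.mp ht
      · simpa using hxW
      · simpa [hupdate t ht] using hgW t ht
    · rw [coe_insert]
      refine Set.PairwiseDisjoint.insert (fun i hi j hj hij ↦ ?_) fun t ht _ ↦ ?_
      · simpa [hupdate i hi, hupdate j hj] using hg hi hj hij
      · rw [Function.update_self, hupdate t ht]
        exact (disjoint_pair_of_notMem hxU hxuU).mono_right
          (subset_biUnion_of_mem (fun t ↦ ({g t, g t + u t} : Finset G)) ht)

end GreedyPairs

lemma four_mul_two_pow_sub_two_lt (d : ℕ) : 4 * 2 ^ (d - 2) < 2 ^ d + 4 := by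
  rcases Nat.lt_or_ge d 2 with hd | hd
  · interval_cases d <;> norm_num
  · rw [show 4 = 2 ^ 2 from rfl, ← pow_add, Nat.add_sub_cancel' hd]; omega

theorem stmt16_general (n s : ℕ) (v : Fin s → (Fin n → ZMod 2))
    (d : ℕ) (hd : d = Module.finrank (ZMod 2) (Submodule.span (ZMod 2) (Set.range v)))
    (b : Fin s → ℕ) (hb : ∑ j, b j = 2 ^ (d - 2)) :
    ∃ C : Fin s → Finset (Finset (Fin n → ZMod 2)),
      (∀ j, (C j).card = b j) ∧
      (∀ j, ∀ c ∈ C j, ∃ x ∈ Submodule.span (ZMod 2) (Set.range v),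
        c = ({x, x + v j} : Finset (Fin n → ZMod 2))) ∧
      (∀ j₁ j₂, j₁ ≠ j₂ → ∀ c₁ ∈ C j₁, ∀ c₂ ∈ C j₂, Disjoint c₁ c₂) := by
  classical
  set V := Submodule.span (ZMod 2) (Set.range v)
  set F : Finset (Σ _ : Fin s, ℕ) := univ.sigma fun j ↦ range (b j)
  have hV : #(V : Set (Fin n → ZMod 2)).toFinset = 2 ^ d := by
    rw [Set.toFinset_card, ← Nat.card_eq_fintype_card, SetLike.coe_sort_coe,
      Module.natCard_eq_pow_finrank (K := ZMod 2), Nat.card_zmod, hd]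
  have hF : 4 * #F < #(V : Set (Fin n → ZMod 2)).toFinset + 4 := by
    rw [hV, card_sigma]
    simpa only [card_range, hb] using four_mul_two_pow_sub_two_lt d
  obtain ⟨g, hgV, hg⟩ := exists_pairwiseDisjoint_pairs _ (fun t ↦ v t.1) F hF
  have hmem : ∀ {j i}, i ∈ range (b j) → (⟨j, i⟩ : Σ _ : Fin s, ℕ) ∈ F := fun hi ↦
    mem_sigma.mpr ⟨mem_univ _, hi⟩
  refine ⟨fun j ↦ (range (b j)).image fun i ↦ {g ⟨j, i⟩, g ⟨j, i⟩ + v j}, fun j ↦ ?_,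
    fun j c hc ↦ ?_, fun j₁ j₂ hj c₁ hc₁ c₂ hc₂ ↦ ?_⟩
  · refine (card_image_of_injOn fun i hi i' hi' hii ↦ ?_).trans (card_range _)
    have hgi : g ⟨j, i⟩ ∈ ({g ⟨j, i'⟩, g ⟨j, i'⟩ + v j} : Finset _) := by
      rw [← hii]; exact mem_insert_self _ _
    simpa using hg.elim_finset (hmem hi) (hmem hi') _ (mem_insert_self _ _) hgi
  · obtain ⟨i, hi, rfl⟩ := mem_image.mp hc
    exact ⟨g ⟨j, i⟩, by simpa using hgV _ (hmem hi), rfl⟩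
  · obtain ⟨i₁, hi₁, rfl⟩ := mem_image.mp hc₁
    obtain ⟨i₂, hi₂, rfl⟩ := mem_image.mp hc₂
    exact hg (hmem hi₁) (hmem hi₂) (by simp [hj])

/-- Lemma 3: Let `S = {v 0, …, v (s-1)}` be `s` distinct nonzero vectors in `F_2^n` with
`d = dim ⟨S⟩ ≥ 2`.  In the `s`-partite graph `G_S`, whose `j`-th part consists of the cosets
`{x, x + v j}` with `x ∈ ⟨S⟩` and where two cosets from different parts are adjacent iff they
intersect, for any prescribed part sizes `b j` with `∑ b j = 2^{d-2}` there is an independent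
set meeting the `j`-th part in exactly `b j` vertices.  An independent set with `|A ∩ V_j| = b j`
is encoded as a family `C j` of `b j` cosets of the form `{x, x + v j}` with `x ∈ ⟨S⟩`, such
that cosets chosen from different parts are pairwise disjoint. -/
theorem stmt16 (n s : ℕ) (v : Fin s → (Fin n → ZMod 2))
    (hinj : Function.Injective v) (hne : ∀ j, v j ≠ 0)
    (d : ℕ) (hd : d = Module.finrank (ZMod 2) (Submodule.span (ZMod 2) (Set.range v)))
    (hd2 : 2 ≤ d)
    (b : Fin s → ℕ) (hb : ∑ j, b j = 2 ^ (d - 2)) :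
    ∃ C : Fin s → Finset (Finset (Fin n → ZMod 2)),
      (∀ j, (C j).card = b j) ∧
      (∀ j, ∀ c ∈ C j, ∃ x ∈ Submodule.span (ZMod 2) (Set.range v),
        c = ({x, x + v j} : Finset (Fin n → ZMod 2))) ∧
      (∀ j₁ j₂, j₁ ≠ j₂ → ∀ c₁ ∈ C j₁, ∀ c₂ ∈ C j₂, Disjoint c₁ c₂) :=
  stmt16_general n s v d hd b hb
end
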